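/- Let K be a number field of degree d over ℚ and let s > 1 be a real number. Then the function assigning to each nonzero ideal I of the ring of integers O_K the real number (N(I))^{−s} is summable, and its sum satisfies ∑_{0 ≠ I ⊆ O_K} N(I)^{−s} ≤ (∑_{m=1}^{∞} m^{−s})^d. In other words, the Dedekind zeta function of K satisfies ζ_K(s) ≤ ζ(s)^d for real s > 1. -/
import Mathlib

open NumberField Ideal UniqueFactorizationMonoid Module

section MultisetHelpers

variable {α ι M : Type*}

lemma multiset_prod_fiber [CommMonoid M] [Fintype ι] [DecidableEq ι]
    (t : Multiset α) (f : α → ι) (g : α → M) [DecidableEq α] :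
    (∏ i : ι, ((t.filter (fun a => f a = i)).map g).prod) = (t.map g).prod := by
  induction t using Multiset.induction_on with
  | empty => simp
  | cons a t ih =>
    have step : ∀ i : ι, (((a ::ₘ t).filter (fun x => f x = i)).map g).prod
        = (if f a = i then g a else 1) * ((t.filter (fun x => f x = i)).map g).prod := by
      intro i
      by_cases h : f a = i
      · rw [Multiset.filter_cons_of_pos (p := fun x => f x = i) t h, Multiset.map_cons, Multiset.prod_cons, if_pos h]
      · rw [Multiset.filter_cons_of_neg (p := fun x => f x = i) t h, if_neg h, one_mul]
    rw [Finset.prod_congr rfl (fun i _ => step i), Finset.prod_mul_distrib,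
      Finset.prod_ite_eq, if_pos (Finset.mem_univ _), Multiset.map_cons, Multiset.prod_cons, ih]

lemma multiset_sum_map_eq_count_mul [DecidableEq α] (t : Multiset α) (g : α → ℕ) (a : α)
    (h : ∀ b ∈ t, b ≠ a → g b = 0) : (t.map g).sum = t.count a * g a := by
  induction t using Multiset.induction_on with
  | empty => simp
  | cons b t ih =>
    rw [Multiset.map_cons, Multiset.sum_cons,
      ih (fun c hc hc' => h c (Multiset.mem_cons_of_mem hc) hc')]
    rcases eq_or_ne b a with rfl | hb
    · rw [Multiset.count_cons_self]; ring
    · rw [Multiset.count_cons_of_ne (Ne.symm hb), h b (Multiset.mem_cons_self _ _) hb, zero_add]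

lemma multiset_factorization_prod (t : Multiset ℕ) (h : ∀ x ∈ t, x ≠ 0) (p : ℕ) :
    (t.prod).factorization p = (t.map (fun n => n.factorization p)).sum := by
  induction t using Multiset.induction_on with
  | empty => simp
  | cons b t ih =>
    have hb : b ≠ 0 := h b (Multiset.mem_cons_self _ _)
    have ht : t.prod ≠ 0 := by
      rw [Ne, Multiset.prod_eq_zero_iff]
      exact fun h0 => h 0 (Multiset.mem_cons_of_mem h0) rfl
    rw [Multiset.prod_cons, Nat.factorization_mul hb ht, Finsupp.add_apply,
      Multiset.map_cons, Multiset.sum_cons,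
      ih (fun c hc => h c (Multiset.mem_cons_of_mem hc))]

end MultisetHelpers

section NF
variable (K : Type*) [Field K] [NumberField K]

lemma norm_span_natCast (p : ℕ) :
    Ideal.absNorm (Ideal.span {(p : 𝓞 K)}) = p ^ finrank ℚ K := by
  have h1 : (p : 𝓞 K) = algebraMap ℤ (𝓞 K) (p : ℤ) := by simp
  rw [Ideal.absNorm_span_singleton, h1,
    Algebra.norm_algebraMap_of_basis (Module.Free.chooseBasis ℤ (𝓞 K)),
    ← Module.finrank_eq_card_chooseBasisIndex, NumberField.RingOfIntegers.rank]
  simp [Int.natAbs_pow]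

lemma exists_char (P : Ideal (𝓞 K)) (hP : P.IsPrime) (h0 : P ≠ ⊥) :
    ∃ p f : ℕ, p.Prime ∧ 0 < f ∧ Ideal.absNorm P = p ^ f ∧ (p : 𝓞 K) ∈ P := by
  classical
  set q : Ideal ℤ := P.comap (algebraMap ℤ (𝓞 K)) with hqdef
  have hq : q.IsPrime := Ideal.comap_isPrime _ P
  have hNP : Ideal.absNorm P ≠ 0 := by
    rw [Ne, Ideal.absNorm_eq_zero_iff]; exact h0
  have hmem : ((Ideal.absNorm P : ℤ)) ∈ q := by
    show algebraMap ℤ (𝓞 K) _ ∈ P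
    simpa using Ideal.absNorm_mem P
  have hq0 : q ≠ ⊥ := by
    intro h
    rw [h] at hmem
    exact hNP (by exact_mod_cast (Ideal.mem_bot.mp hmem))
  obtain ⟨g, hgen⟩ : ∃ g : ℤ, q = Ideal.span {g} :=
    ⟨Submodule.IsPrincipal.generator q, (Ideal.span_singleton_generator q).symm⟩
  have hg0 : g ≠ 0 := by
    rintro rfl
    rw [hgen, Ideal.span_singleton_eq_bot.mpr rfl] at hq0
    exact hq0 rfl
  have hgprime : Prime g := by
    rw [← Ideal.span_singleton_prime hg0, ← hgen]; exact hq
  set p := g.natAbs with hpdef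
  have hpp : p.Prime := Int.prime_iff_natAbs_prime.mp hgprime
  have hpq : ((p : ℕ) : ℤ) ∈ q := by
    rw [hgen]
    exact Ideal.mem_span_singleton.mpr (Int.dvd_natAbs.mpr dvd_rfl)
  have hpP : ((p : ℕ) : 𝓞 K) ∈ P := by
    have := hpq
    rw [hqdef, Ideal.mem_comap] at this
    simpa using this
  have hdvd : Ideal.absNorm P ∣ p ^ finrank ℚ K := by
    rw [← norm_span_natCast K p]
    exact Ideal.absNorm_dvd_absNorm_of_le ((Ideal.span_singleton_le_iff_mem _).mpr hpP)
  obtain ⟨f, hf, hNPf⟩ := (Nat.dvd_prime_pow hpp).mp hdvd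
  refine ⟨p, f, hpp, ?_, hNPf, hpP⟩
  rcases Nat.eq_zero_or_pos f with h | h
  · exfalso
    rw [h, pow_zero] at hNPf
    exact hP.ne_top (Ideal.absNorm_eq_one_iff.mp hNPf)
  · exact h

noncomputable def charOf (P : Ideal (𝓞 K)) : ℕ := (Ideal.absNorm P).minFac

lemma charOf_spec (P : Ideal (𝓞 K)) (hP : P.IsPrime) (h0 : P ≠ ⊥) :
    (charOf K P).Prime ∧ ((charOf K P : ℕ) : 𝓞 K) ∈ P ∧
      ∃ f, 0 < f ∧ Ideal.absNorm P = charOf K P ^ f := by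
  obtain ⟨p, f, hp, hf, hN, hm⟩ := exists_char K P hP h0
  have hc : charOf K P = p := by
    rw [charOf, hN, Nat.pow_minFac hf.ne', Nat.Prime.minFac_eq hp]
  rw [hc]
  exact ⟨hp, hm, f, hf, hN⟩

def fiber (p : ℕ) : Set (Ideal (𝓞 K)) := {P | P.IsPrime ∧ P ≠ ⊥ ∧ charOf K P = p}

lemma fiber_subset_nonprime {p : ℕ} (hp : ¬ p.Prime) : fiber K p = ∅ := by
  ext P
  simp only [fiber, Set.mem_setOf_eq, Set.mem_empty_iff_false, iff_false]
  rintro ⟨hP, h0, hc⟩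
  obtain ⟨hpp, -, -⟩ := charOf_spec K P hP h0
  rw [hc] at hpp
  exact hp hpp

lemma fiber_norm_dvd {p : ℕ} {P : Ideal (𝓞 K)} (h : P ∈ fiber K p) :
    Ideal.absNorm P ∣ p ^ finrank ℚ K := by
  obtain ⟨hP, h0, hc⟩ := h
  obtain ⟨hpp, hmem, f, hf, hN⟩ := charOf_spec K P hP h0
  rw [← norm_span_natCast K p]
  refine Ideal.absNorm_dvd_absNorm_of_le ((Ideal.span_singleton_le_iff_mem _).mpr ?_)
  rw [← hc]; exact hmem

lemma fiber_finite (p : ℕ) : (fiber K p).Finite := by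
  by_cases hp : p.Prime
  · refine (Ideal.finite_setOf_absNorm_le (p ^ finrank ℚ K)).subset ?_
    intro P hP
    exact Nat.le_of_dvd (pow_pos hp.pos _) (fiber_norm_dvd K hP)
  · rw [fiber_subset_nonprime K hp]; exact Set.finite_empty

lemma fiber_card (p : ℕ) (s : Finset (Ideal (𝓞 K))) (hs : ∀ P ∈ s, P ∈ fiber K p) :
    s.card ≤ finrank ℚ K := by
  rcases Finset.eq_empty_or_nonempty s with rfl | ⟨P₀, hP₀⟩
  · simp [Module.finrank_pos.le]
  have hp : p.Prime := by
    by_contra hp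
    have := hs P₀ hP₀
    rw [fiber_subset_nonprime K hp] at this
    exact this
  have h1 : ∀ P ∈ s, Prime P := fun P hP =>
    Ideal.prime_of_isPrime (hs P hP).2.1 (hs P hP).1
  have h2 : ∀ P ∈ s, P ∣ Ideal.span {(p : 𝓞 K)} := by
    intro P hP
    obtain ⟨hPp, h0, hc⟩ := hs P hP
    obtain ⟨-, hmem, -⟩ := charOf_spec K P hPp h0
    rw [Ideal.dvd_iff_le]
    refine (Ideal.span_singleton_le_iff_mem _).mpr ?_
    rw [← hc]; exact hmem
  have h3 : (∏ P ∈ s, P) ∣ Ideal.span {(p : 𝓞 K)} := Finset.prod_primes_dvd _ h1 h2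
  have h4 : (∏ P ∈ s, Ideal.absNorm P) ∣ p ^ finrank ℚ K := by
    rw [← norm_span_natCast K p, ← map_prod Ideal.absNorm]
    exact map_dvd Ideal.absNorm h3
  have h5 : p ^ s.card ∣ ∏ P ∈ s, Ideal.absNorm P := by
    have hconst : (∏ _P ∈ s, p) = p ^ s.card := Finset.prod_const (s := s) (b := p)
    rw [← hconst]
    refine Finset.prod_dvd_prod_of_dvd (fun _ => p) (fun P => Ideal.absNorm P) ?_
    intro P hP
    obtain ⟨hPp, h0, hc⟩ := hs P hP
    obtain ⟨-, -, f, hf, hN⟩ := charOf_spec K P hPp h0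
    show p ∣ Ideal.absNorm P
    rw [hN, hc]
    exact dvd_pow_self p hf.ne'
  exact (Nat.pow_dvd_pow_iff_le_right hp.one_lt).mp (h5.trans h4)

noncomputable def fiberEmb (p : ℕ) : (fiber K p) ↪ Fin (finrank ℚ K) := by
  haveI : Fintype (fiber K p) := (fiber_finite K p).fintype
  refine (Function.Embedding.nonempty_of_card_le ?_).some
  rw [Fintype.card_fin, ← Set.toFinset_card]
  exact fiber_card K p (fiber K p).toFinset (fun P hP => by simpa using hP)

open scoped Classical in
noncomputable def idx (P : Ideal (𝓞 K)) : Fin (finrank ℚ K) :=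
  if h : P.IsPrime ∧ P ≠ ⊥ then fiberEmb K (charOf K P) ⟨P, h.1, h.2, rfl⟩
  else ⟨0, Module.finrank_pos⟩

lemma emb_inj_aux {p q : ℕ} (hpq : p = q) (a : fiber K p) (b : fiber K q)
    (h : fiberEmb K p a = fiberEmb K q b) : (a : Ideal (𝓞 K)) = b := by
  subst hpq
  exact congrArg _ ((fiberEmb K p).injective h)

lemma idx_inj {P Q : Ideal (𝓞 K)} (hP : P.IsPrime ∧ P ≠ ⊥) (hQ : Q.IsPrime ∧ Q ≠ ⊥)
    (hc : charOf K P = charOf K Q) (h : idx K P = idx K Q) : P = Q := by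
  classical
  rw [idx, dif_pos hP, idx, dif_pos hQ] at h
  exact emb_inj_aux K hc _ _ h

lemma factor_mem {I P : Ideal (𝓞 K)} (hP : P ∈ factors I) : P.IsPrime ∧ P ≠ ⊥ := by
  have h := prime_of_factor P hP
  exact ⟨Ideal.isPrime_of_prime h, h.ne_zero⟩

open scoped Classical in
noncomputable def jfun (I : Ideal (𝓞 K)) (i : Fin (finrank ℚ K)) : ℕ :=
  (((factors I).filter (fun P => idx K P = i)).map Ideal.absNorm).prod

open scoped Classical in
lemma prod_jfun {I : Ideal (𝓞 K)} (hI : I ≠ 0) :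
    (∏ i, jfun K I i) = Ideal.absNorm I := by
  unfold jfun
  rw [multiset_prod_fiber (factors I) (fun P => idx K P) Ideal.absNorm]
  rw [← map_multiset_prod (Ideal.absNorm : Ideal (𝓞 K) →*₀ ℕ)]
  rw [associated_iff_eq.mp (factors_prod hI)]

lemma jfun_pos {I : Ideal (𝓞 K)} (hI : I ≠ 0) (i : Fin (finrank ℚ K)) :
    0 < jfun K I i := by
  classical
  refine Multiset.prod_pos ?_
  intro a ha
  rw [Multiset.mem_map] at ha
  obtain ⟨P, hP, rfl⟩ := ha
  rw [Multiset.mem_filter] at hP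
  have := (factor_mem K hP.1).2
  exact Nat.pos_of_ne_zero (fun h => this (Ideal.absNorm_eq_zero_iff.mp h))

open scoped Classical in
lemma jfun_count {I : Ideal (𝓞 K)} (hI : I ≠ 0) {P : Ideal (𝓞 K)} (hP : Prime P) :
    (jfun K I (idx K P)).factorization (charOf K P)
      = (factors I).count P * (Ideal.absNorm P).factorization (charOf K P) := by
  unfold jfun
  set i := idx K P
  set p := charOf K P with hp
  set t := (factors I).filter (fun Q => idx K Q = i) with ht
  have hmem : ∀ Q ∈ t, Q.IsPrime ∧ Q ≠ ⊥ := by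
    intro Q hQ
    rw [ht, Multiset.mem_filter] at hQ
    exact factor_mem K hQ.1
  have h0 : ∀ x ∈ t.map Ideal.absNorm, x ≠ 0 := by
    intro x hx
    rw [Multiset.mem_map] at hx
    obtain ⟨Q, hQ, rfl⟩ := hx
    rw [Ne, Ideal.absNorm_eq_zero_iff]
    exact (hmem Q hQ).2
  rw [multiset_factorization_prod _ h0 p, Multiset.map_map]
  have hvanish : ∀ Q ∈ t, Q ≠ P →
      (Function.comp (fun n => n.factorization p) Ideal.absNorm) Q = 0 := by
    intro Q hQ hQP
    obtain ⟨hQp, hQ0⟩ := hmem Q hQ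
    obtain ⟨hq, -, f, hf, hN⟩ := charOf_spec K Q hQp hQ0
    have hti : idx K Q = i := (Multiset.mem_filter.mp hQ).2
    have hcq : charOf K Q ≠ p := by
      intro hcq
      exact hQP (idx_inj K ⟨hQp, hQ0⟩ ⟨Ideal.isPrime_of_prime hP, hP.ne_zero⟩ (hcq.trans hp) hti)
    show (Ideal.absNorm Q).factorization p = 0
    rw [hN, Nat.Prime.factorization_pow hq, Finsupp.single_apply_eq_zero]
    intro h
    exact absurd h.symm hcq
  rw [multiset_sum_map_eq_count_mul t _ P hvanish]
  congr 1
  rw [ht, Multiset.count_filter, if_pos rfl]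

lemma jfun_inj {I J : Ideal (𝓞 K)} (hI : I ≠ 0) (hJ : J ≠ 0)
    (h : jfun K I = jfun K J) : I = J := by
  classical
  suffices hs : factors I = factors J by
    rw [← associated_iff_eq.mp (factors_prod hI), ← associated_iff_eq.mp (factors_prod hJ), hs]
  refine Multiset.ext.mpr (fun P => ?_)
  by_cases hP : Prime P
  · obtain ⟨hq, -, f, hf, hN⟩ :=
      charOf_spec K P (Ideal.isPrime_of_prime hP) hP.ne_zero
    have hfpos : 0 < (Ideal.absNorm P).factorization (charOf K P) := by
      rw [hN, Nat.Prime.factorization_pow hq, Finsupp.single_eq_same]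
      exact hf
    have h1 := jfun_count K hI hP
    have h2 := jfun_count K hJ hP
    rw [h, h2] at h1
    exact (Nat.eq_of_mul_eq_mul_right hfpos h1.symm)
  · rw [Multiset.count_eq_zero_of_notMem, Multiset.count_eq_zero_of_notMem]
    · exact fun hmem => hP (prime_of_factor P hmem)
    · exact fun hmem => hP (prime_of_factor P hmem)

lemma tsum_pi_prod (h : ℕ → ENNReal) :
    ∀ n : ℕ, (∑' v : Fin n → ℕ, ∏ i, h (v i)) = (∑' m : ℕ, h m) ^ n := by
  intro n
  induction n with
  | zero =>
    rw [pow_zero]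
    have h1 : ∀ v : Fin 0 → ℕ, (∏ i, h (v i)) = 1 := by intro v; simp
    rw [tsum_congr h1]
    exact tsum_eq_single (default : Fin 0 → ℕ) (fun b hb => absurd (Subsingleton.elim b default) hb) |>.trans rfl
  | succ n ih =>
    let e := Fin.consEquiv (fun _ : Fin (n+1) => ℕ)
    rw [← e.tsum_eq (fun v : Fin (n+1) → ℕ => ∏ i, h (v i))]
    have h1 : ∀ x : ℕ × (Fin n → ℕ), (∏ i, h ((e x) i)) = h x.1 * ∏ i, h (x.2 i) := by
      rintro ⟨a, g⟩
      rw [Fin.prod_univ_succ]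
      simp [e, Fin.consEquiv]
    rw [tsum_congr h1, ENNReal.tsum_prod']
    have h2 : ∀ a : ℕ, (∑' g : Fin n → ℕ, h a * ∏ i, h (g i)) = h a * (∑' m : ℕ, h m) ^ n := by
      intro a
      rw [ENNReal.tsum_mul_left, ih]
    rw [tsum_congr h2, ENNReal.tsum_mul_right, pow_succ]
    ring

end NF

/-- **Dedekind zeta bound `ζ_K(s) ≤ ζ(s)^d`.**
Let `K` be a number field of degree `d` over `ℚ` and `s > 1` a real number.
Then `I ↦ N(I)^{-s}` is summable over the nonzero ideals of `O_K`, and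
`∑_{0 ≠ I ⊆ O_K} N(I)^{-s} ≤ (∑_{m ≥ 1} m^{-s})^d`. -/
theorem dedekindZeta_le_riemannZeta_pow
    (K : Type*) [Field K] [NumberField K] (s : ℝ) (hs : 1 < s) :
    Summable (fun I : {I : Ideal (𝓞 K) // I ≠ 0} =>
      ((Ideal.absNorm (I : Ideal (𝓞 K)) : ℝ)) ^ (-s)) ∧
    (∑' I : {I : Ideal (𝓞 K) // I ≠ 0},
        ((Ideal.absNorm (I : Ideal (𝓞 K)) : ℝ)) ^ (-s)) ≤
      (∑' m : ℕ, ((m : ℝ) + 1) ^ (-s)) ^ (Module.finrank ℚ K) := by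
  classical
  set d := Module.finrank ℚ K with hd
  -- the embedding into `Fin d → ℕ`
  set emb : {I : Ideal (𝓞 K) // I ≠ 0} → (Fin d → ℕ) :=
    fun I i => jfun K I.1 i - 1 with hembdef
  have hemb1 : ∀ (I : {I : Ideal (𝓞 K) // I ≠ 0}) (i : Fin d), emb I i + 1 = jfun K I.1 i :=
    fun I i => Nat.succ_pred_eq_of_pos (jfun_pos K I.2 i)
  have hembinj : Function.Injective emb := by
    intro I J h
    refine Subtype.ext (jfun_inj K I.2 J.2 (funext fun i => ?_))
    rw [← hemb1 I i, ← hemb1 J i, h]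
  -- ENNReal-valued functions
  set h : ℕ → ENNReal := fun m => ENNReal.ofReal (((m : ℝ) + 1) ^ (-s)) with hhdef
  set G : (Fin d → ℕ) → ENNReal := fun v => ∏ i, h (v i) with hGdef
  set F : {I : Ideal (𝓞 K) // I ≠ 0} → ENNReal :=
    fun I => ENNReal.ofReal ((Ideal.absNorm I.1 : ℝ) ^ (-s)) with hFdef
  have hFG : ∀ I, F I = G (emb I) := by
    intro I
    have hcast : (Ideal.absNorm I.1 : ℝ) = ∏ i, ((jfun K I.1 i : ℝ)) := by
      rw [← prod_jfun K I.2]; push_cast; rfl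
    have hprod : ((Ideal.absNorm I.1 : ℝ)) ^ (-s) = ∏ i, ((jfun K I.1 i : ℝ)) ^ (-s) := by
      rw [hcast, ← Real.finset_prod_rpow _ _ (fun i _ => Nat.cast_nonneg _)]
    show ENNReal.ofReal ((Ideal.absNorm I.1 : ℝ) ^ (-s)) = ∏ i, h (emb I i)
    rw [hprod]
    rw [ENNReal.ofReal_prod_of_nonneg (fun i _ => Real.rpow_nonneg (Nat.cast_nonneg _) _)]
    refine Finset.prod_congr rfl (fun i _ => ?_)
    have heq1 : ((jfun K I.1 i : ℝ)) = ((emb I i : ℝ) + 1) := by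
      rw [← hemb1 I i]; push_cast; ring
    rw [heq1]
  -- summability of the riemann zeta series
  have hζsum : Summable (fun m : ℕ => ((m : ℝ) + 1) ^ (-s)) := by
    have h1 : Summable (fun n : ℕ => (n : ℝ) ^ (-s)) :=
      Real.summable_nat_rpow.mpr (by linarith)
    have h2 := h1.comp_injective (add_left_injective 1)
    refine h2.congr (fun m => ?_)
    simp [Function.comp]
  have hζ0 : (0:ℝ) ≤ ∑' m : ℕ, ((m : ℝ) + 1) ^ (-s) :=
    tsum_nonneg (fun m => Real.rpow_nonneg (by positivity) _)
  -- the chain of inequalities in ENNReal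
  have hsum_h : (∑' m : ℕ, h m) = ENNReal.ofReal (∑' m : ℕ, ((m : ℝ) + 1) ^ (-s)) :=
    (ENNReal.ofReal_tsum_of_nonneg (fun m => Real.rpow_nonneg (by positivity) _) hζsum).symm
  have chain : (∑' I : {I : Ideal (𝓞 K) // I ≠ 0}, F I)
      ≤ ENNReal.ofReal ((∑' m : ℕ, ((m : ℝ) + 1) ^ (-s)) ^ d) := by
    calc (∑' I : {I : Ideal (𝓞 K) // I ≠ 0}, F I)
        = ∑' I : {I : Ideal (𝓞 K) // I ≠ 0}, G (emb I) := tsum_congr hFG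
      _ ≤ ∑' v : Fin d → ℕ, G v := ENNReal.tsum_comp_le_tsum_of_injective hembinj G
      _ = (∑' m : ℕ, h m) ^ d := tsum_pi_prod h d
      _ = ENNReal.ofReal ((∑' m : ℕ, ((m : ℝ) + 1) ^ (-s)) ^ d) := by
          rw [hsum_h, ← ENNReal.ofReal_pow hζ0]
  have hne : (∑' I : {I : Ideal (𝓞 K) // I ≠ 0}, F I) ≠ ⊤ :=
    ne_top_of_le_ne_top ENNReal.ofReal_ne_top chain
  have hFnonneg : ∀ I : {I : Ideal (𝓞 K) // I ≠ 0},
      (0:ℝ) ≤ ((Ideal.absNorm I.1 : ℝ)) ^ (-s) :=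
    fun I => Real.rpow_nonneg (Nat.cast_nonneg _) _
  have hsummable : Summable (fun I : {I : Ideal (𝓞 K) // I ≠ 0} =>
      ((Ideal.absNorm (I : Ideal (𝓞 K)) : ℝ)) ^ (-s)) := by
    refine (ENNReal.summable_toReal hne).congr (fun I => ?_)
    exact ENNReal.toReal_ofReal (hFnonneg I)
  refine ⟨hsummable, ?_⟩
  have heq : (∑' I : {I : Ideal (𝓞 K) // I ≠ 0},
      ((Ideal.absNorm (I : Ideal (𝓞 K)) : ℝ)) ^ (-s))
      = (∑' I : {I : Ideal (𝓞 K) // I ≠ 0}, F I).toReal := by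
    rw [ENNReal.tsum_toReal_eq (fun I => ENNReal.ofReal_ne_top)]
    exact tsum_congr (fun I => (ENNReal.toReal_ofReal (hFnonneg I)).symm)
  rw [heq]
  calc (∑' I : {I : Ideal (𝓞 K) // I ≠ 0}, F I).toReal
      ≤ (ENNReal.ofReal ((∑' m : ℕ, ((m : ℝ) + 1) ^ (-s)) ^ d)).toReal :=
        ENNReal.toReal_mono ENNReal.ofReal_ne_top chain
    _ = (∑' m : ℕ, ((m : ℝ) + 1) ^ (-s)) ^ d :=
        ENNReal.toReal_ofReal (pow_nonneg hζ0 d)
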